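/- arXiv:1902.08252 — 2 statements merged into one kernel-verified Lean document; each statement's English description precedes it below -/
import Mathlib

section
/- Let x, y : I → ℝ be bounded functions on a set I, and a : I → ℝ with sup_{t∈I} |a(t)| ≤ a₀ < 1. Suppose y(t) = x(t) − a(t)·x(g(t)) for all t ∈ I, where g : I → I. Then sup_{t∈I} |x(t)| ≤ (1/(1 − a₀)) · sup_{t∈I} |y(t)|. -/
/-- First estimate of Lemma 9: `sup |x| ≤ (1/(1-a₀)) sup |y|`. -/
theorem stmt_1 {α : Type*} (I : Set α) (hne : I.Nonempty)
    (x y a : α → ℝ) (g : α → α) (hg : ∀ t ∈ I, g t ∈ I)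
    (a₀ : ℝ) (ha₁ : a₀ < 1) (ha : ∀ t ∈ I, |a t| ≤ a₀)
    (hy : ∀ t ∈ I, y t = x t - a t * x (g t))
    (hbx : BddAbove ((fun t => |x t|) '' I))
    (hby : BddAbove ((fun t => |y t|) '' I)) :
    (⨆ t : I, |x t|) ≤ (1 / (1 - a₀)) * ⨆ t : I, |y t| := by
  have hne' : Nonempty I := hne.to_subtype
  have hbx' : BddAbove (Set.range fun t : I => |x t|) := by
    rw [Set.image_eq_range] at hbx; exact hbx
  have hby' : BddAbove (Set.range fun t : I => |y t|) := by
    rw [Set.image_eq_range] at hby; exact hby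
  set X := ⨆ t : I, |x t| with hX
  set Y := ⨆ t : I, |y t| with hY
  obtain ⟨t₀, ht₀⟩ := hne
  have ha₀ : 0 ≤ a₀ := le_trans (abs_nonneg _) (ha t₀ ht₀)
  have key : X ≤ Y + a₀ * X := by
    apply ciSup_le
    rintro ⟨t, ht⟩
    have hx : x t = y t + a t * x (g t) := by rw [hy t ht]; ring
    have h1 : |x t| ≤ |y t| + a₀ * |x (g t)| := by
      calc |x t| ≤ |y t| + |a t * x (g t)| := by rw [hx]; exact abs_add_le _ _
        _ ≤ |y t| + a₀ * |x (g t)| := by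
            rw [abs_mul]; gcongr; exact ha t ht
    have h2 : |y t| ≤ Y := le_ciSup hby' ⟨t, ht⟩
    have h3 : |x (g t)| ≤ X := le_ciSup hbx' ⟨g t, hg t ht⟩
    calc |x t| ≤ |y t| + a₀ * |x (g t)| := h1
      _ ≤ Y + a₀ * X := by gcongr
  have h1a : 0 < 1 - a₀ := by linarith
  rw [div_mul_eq_mul_div, one_mul, le_div_iff₀ h1a]
  nlinarith [key]
end

section
/- Under the hypotheses of the previous statement, if in addition y is differentiable on I = [t₀, t₁], b : I → ℝ satisfies |b(t)| ≤ B, h : I → I, f : I → ℝ satisfies |f(t)| ≤ F, and y′(t) = −b(t)·x(h(t)) + f(t) for all t ∈ I, then sup_{t∈I} |y′(t)| ≤ (B/(1 − a₀))·sup_{t∈I} |y(t)| + F. -/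
/-- Second estimate of Lemma 9: `sup |y'| ≤ (B/(1-a₀)) sup |y| + F`. -/
theorem stmt_2 (t₀ t₁ : ℝ) (ht : t₀ ≤ t₁)
    (x y y' a b f : ℝ → ℝ) (g h : ℝ → ℝ)
    (hg : ∀ t ∈ Set.Icc t₀ t₁, g t ∈ Set.Icc t₀ t₁)
    (hh : ∀ t ∈ Set.Icc t₀ t₁, h t ∈ Set.Icc t₀ t₁)
    (a₀ B F : ℝ) (ha₁ : a₀ < 1)
    (ha : ∀ t ∈ Set.Icc t₀ t₁, |a t| ≤ a₀)
    (hb : ∀ t ∈ Set.Icc t₀ t₁, |b t| ≤ B)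
    (hf : ∀ t ∈ Set.Icc t₀ t₁, |f t| ≤ F)
    (hyx : ∀ t ∈ Set.Icc t₀ t₁, y t = x t - a t * x (g t))
    (hderiv : ∀ t ∈ Set.Icc t₀ t₁, HasDerivAt y (y' t) t)
    (hrel : ∀ t ∈ Set.Icc t₀ t₁, y' t = -(b t) * x (h t) + f t)
    (hbx : BddAbove ((fun t => |x t|) '' Set.Icc t₀ t₁))
    (hby : BddAbove ((fun t => |y t|) '' Set.Icc t₀ t₁)) :
    (⨆ t : Set.Icc t₀ t₁, |y' t|) ≤
      (B / (1 - a₀)) * (⨆ t : Set.Icc t₀ t₁, |y t|) + F := by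
  set I := Set.Icc t₀ t₁ with hI
  have hne : I.Nonempty := ⟨t₀, le_refl _, ht⟩
  haveI : Nonempty I := hne.to_subtype
  have ha₀ : 0 ≤ a₀ := le_trans (abs_nonneg _) (ha t₀ ⟨le_refl _, ht⟩)
  have hB : 0 ≤ B := le_trans (abs_nonneg _) (hb t₀ ⟨le_refl _, ht⟩)
  have h1a : 0 < 1 - a₀ := by linarith
  set Mx := ⨆ t : I, |x t| with hMx
  set My := ⨆ t : I, |y t| with hMy
  have hbx' : BddAbove (Set.range fun t : I => |x t|) := by
    exact Set.image_eq_range (fun t => |x t|) I ▸ hbx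
  have hby' : BddAbove (Set.range fun t : I => |y t|) := by
    exact Set.image_eq_range (fun t => |y t|) I ▸ hby
  have hxle : ∀ t ∈ I, |x t| ≤ Mx := fun t htI =>
    le_ciSup hbx' (⟨t, htI⟩ : I)
  have hyle : ∀ t ∈ I, |y t| ≤ My := fun t htI =>
    le_ciSup hby' (⟨t, htI⟩ : I)
  have hMx0 : 0 ≤ Mx := le_trans (abs_nonneg _) (hxle t₀ ⟨le_refl _, ht⟩)
  have hMy0 : 0 ≤ My := le_trans (abs_nonneg _) (hyle t₀ ⟨le_refl _, ht⟩)
  -- first estimate: Mx ≤ My / (1 - a₀)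
  have key : Mx ≤ My / (1 - a₀) := by
    have : Mx ≤ My + a₀ * Mx := by
      refine ciSup_le fun t => ?_
      have htI := t.2
      have hx : x t.1 = y t.1 + a t.1 * x (g t.1) := by
        have := hyx t.1 htI; linarith
      calc |x t.1| ≤ |y t.1| + |a t.1 * x (g t.1)| := by
            rw [hx]; exact abs_add_le _ _
        _ ≤ My + a₀ * Mx := by
            rw [abs_mul]
            exact add_le_add (hyle t.1 htI)
              (mul_le_mul (ha t.1 htI) (hxle _ (hg t.1 htI)) (abs_nonneg _) ha₀)
    rw [le_div_iff₀ h1a]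
    nlinarith
  refine ciSup_le fun t => ?_
  have htI := t.2
  have : |y' t.1| ≤ B * Mx + F := by
    rw [hrel t.1 htI]
    calc |-(b t.1) * x (h t.1) + f t.1| ≤ |-(b t.1) * x (h t.1)| + |f t.1| := abs_add_le _ _
      _ ≤ B * Mx + F := by
          rw [abs_mul, abs_neg]
          exact add_le_add
            (mul_le_mul (hb t.1 htI) (hxle _ (hh t.1 htI)) (abs_nonneg _) hB)
            (hf t.1 htI)
  calc |y' t.1| ≤ B * Mx + F := this
    _ ≤ B * (My / (1 - a₀)) + F := by
        have := mul_le_mul_of_nonneg_left key hB; linarith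
    _ = (B / (1 - a₀)) * My + F := by ring
end
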